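/- For all n ≥ 1, T_{2n+1}·B_{n-1} = (C_{3n} + C_{n+1})/16, i.e. 16·T_{2n+1}·B_{n-1} = C_{3n} + C_{n+1}, where T_0 = 0, T_1 = 1, T_n = 6T_{n-1} - T_{n-2}; B_0 = 1, B_1 = 5, B_n = 6B_{n-1} - B_{n-2}; C_0 = 2, C_1 = 14, C_n = 6C_{n-1} - C_{n-2}. -/
import Mathlib


def T : ℕ → ℤ
  | 0 => 0
  | 1 => 1
  | (n+2) => 6 * T (n+1) - T n

def B : ℕ → ℤ
  | 0 => 1
  | 1 => 5
  | (n+2) => 6 * B (n+1) - B n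

def C : ℕ → ℤ
  | 0 => 2
  | 1 => 14
  | (n+2) => 6 * C (n+1) - C n

lemma Tstep (n : ℕ) : T (n + 2) = 6 * T (n + 1) - T n := by simp [T]
lemma Bstep (n : ℕ) : B (n + 2) = 6 * B (n + 1) - B n := by simp [B]
lemma Cstep (n : ℕ) : C (n + 2) = 6 * C (n + 1) - C n := by simp [C]

lemma key : ∀ m : ℕ, 16 * (T (2*m+3) * B m) = C (3*m+3) + C (m+2) := by
  intro m
  induction m using Nat.strong_induction_on with
  | _ m ih =>
    match m with
    | 0 => norm_num [T, B, C]
    | 1 => norm_num [T, B, C]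
    | 2 => norm_num [T, B, C]
    | 3 => norm_num [T, B, C]
    | (k+4) =>
      have ih0 := ih k (by omega)
      have ih1 := ih (k+1) (by omega)
      have ih2 := ih (k+2) (by omega)
      have ih3 := ih (k+3) (by omega)
      have hT5 : T (2*k+5) = 6 * T (2*k+4) - T (2*k+3) := by
        rw [show 2*k+5 = 2*k+3+2 by ring, show 2*k+4 = 2*k+3+1 by ring]
        exact Tstep _
      have hT6 : T (2*k+6) = 6 * T (2*k+5) - T (2*k+4) := by
        rw [show 2*k+6 = 2*k+4+2 by ring, show 2*k+5 = 2*k+4+1 by ring]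
        exact Tstep _
      have hT7 : T (2*k+7) = 6 * T (2*k+6) - T (2*k+5) := by
        rw [show 2*k+7 = 2*k+5+2 by ring, show 2*k+6 = 2*k+5+1 by ring]
        exact Tstep _
      have hT8 : T (2*k+8) = 6 * T (2*k+7) - T (2*k+6) := by
        rw [show 2*k+8 = 2*k+6+2 by ring, show 2*k+7 = 2*k+6+1 by ring]
        exact Tstep _
      have hT9 : T (2*k+9) = 6 * T (2*k+8) - T (2*k+7) := by
        rw [show 2*k+9 = 2*k+7+2 by ring, show 2*k+8 = 2*k+7+1 by ring]
        exact Tstep _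
      have hT10 : T (2*k+10) = 6 * T (2*k+9) - T (2*k+8) := by
        rw [show 2*k+10 = 2*k+8+2 by ring, show 2*k+9 = 2*k+8+1 by ring]
        exact Tstep _
      have hT11 : T (2*k+11) = 6 * T (2*k+10) - T (2*k+9) := by
        rw [show 2*k+11 = 2*k+9+2 by ring, show 2*k+10 = 2*k+9+1 by ring]
        exact Tstep _
      have hB2 : B (k+2) = 6 * B (k+1) - B (k+0) := by
        rw [show k+2 = k+0+2 by ring, show k+1 = k+0+1 by ring]
        exact Bstep _
      have hB3 : B (k+3) = 6 * B (k+2) - B (k+1) := by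
        rw [show k+3 = k+1+2 by ring, show k+2 = k+1+1 by ring]
        exact Bstep _
      have hB4 : B (k+4) = 6 * B (k+3) - B (k+2) := by
        rw [show k+4 = k+2+2 by ring, show k+3 = k+2+1 by ring]
        exact Bstep _
      have hC5 : C (3*k+5) = 6 * C (3*k+4) - C (3*k+3) := by
        rw [show 3*k+5 = 3*k+3+2 by ring, show 3*k+4 = 3*k+3+1 by ring]
        exact Cstep _
      have hC6 : C (3*k+6) = 6 * C (3*k+5) - C (3*k+4) := by
        rw [show 3*k+6 = 3*k+4+2 by ring, show 3*k+5 = 3*k+4+1 by ring]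
        exact Cstep _
      have hC7 : C (3*k+7) = 6 * C (3*k+6) - C (3*k+5) := by
        rw [show 3*k+7 = 3*k+5+2 by ring, show 3*k+6 = 3*k+5+1 by ring]
        exact Cstep _
      have hC8 : C (3*k+8) = 6 * C (3*k+7) - C (3*k+6) := by
        rw [show 3*k+8 = 3*k+6+2 by ring, show 3*k+7 = 3*k+6+1 by ring]
        exact Cstep _
      have hC9 : C (3*k+9) = 6 * C (3*k+8) - C (3*k+7) := by
        rw [show 3*k+9 = 3*k+7+2 by ring, show 3*k+8 = 3*k+7+1 by ring]
        exact Cstep _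
      have hC10 : C (3*k+10) = 6 * C (3*k+9) - C (3*k+8) := by
        rw [show 3*k+10 = 3*k+8+2 by ring, show 3*k+9 = 3*k+8+1 by ring]
        exact Cstep _
      have hC11 : C (3*k+11) = 6 * C (3*k+10) - C (3*k+9) := by
        rw [show 3*k+11 = 3*k+9+2 by ring, show 3*k+10 = 3*k+9+1 by ring]
        exact Cstep _
      have hC12 : C (3*k+12) = 6 * C (3*k+11) - C (3*k+10) := by
        rw [show 3*k+12 = 3*k+10+2 by ring, show 3*k+11 = 3*k+10+1 by ring]
        exact Cstep _
      have hC13 : C (3*k+13) = 6 * C (3*k+12) - C (3*k+11) := by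
        rw [show 3*k+13 = 3*k+11+2 by ring, show 3*k+12 = 3*k+11+1 by ring]
        exact Cstep _
      have hC14 : C (3*k+14) = 6 * C (3*k+13) - C (3*k+12) := by
        rw [show 3*k+14 = 3*k+12+2 by ring, show 3*k+13 = 3*k+12+1 by ring]
        exact Cstep _
      have hC15 : C (3*k+15) = 6 * C (3*k+14) - C (3*k+13) := by
        rw [show 3*k+15 = 3*k+13+2 by ring, show 3*k+14 = 3*k+13+1 by ring]
        exact Cstep _
      have hD4 : C (k+4) = 6 * C (k+3) - C (k+2) := by
        rw [show k+4 = k+2+2 by ring, show k+3 = k+2+1 by ring]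
        exact Cstep _
      have hD5 : C (k+5) = 6 * C (k+4) - C (k+3) := by
        rw [show k+5 = k+3+2 by ring, show k+4 = k+3+1 by ring]
        exact Cstep _
      have hD6 : C (k+6) = 6 * C (k+5) - C (k+4) := by
        rw [show k+6 = k+4+2 by ring, show k+5 = k+4+1 by ring]
        exact Cstep _
      simp only [show k+0 = k by ring] at *
      rw [show 2*(k+4)+3 = 2*k+11 by ring, show 3*(k+4)+3 = 3*k+15 by ring,
          show k+4+2 = k+6 by ring]
      rw [show 2*(k+3)+3 = 2*k+9 by ring, show 3*(k+3)+3 = 3*k+12 by ring,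
          show k+3+2 = k+5 by ring] at ih3
      rw [show 2*(k+2)+3 = 2*k+7 by ring, show 3*(k+2)+3 = 3*k+9 by ring,
          show k+2+2 = k+4 by ring] at ih2
      rw [show 2*(k+1)+3 = 2*k+5 by ring, show 3*(k+1)+3 = 3*k+6 by ring,
          show k+1+2 = k+3 by ring] at ih1
      rw [hT11, hT10, hT9, hT8, hT7, hT6, hT5, hB4, hB3, hB2,
          hC15, hC14, hC13, hC12, hC11, hC10, hC9, hC8, hC7, hC6, hC5,
          hD6, hD5, hD4]
      rw [hT9, hT8, hT7, hT6, hT5, hB3, hB2, hC12, hC11, hC10, hC9, hC8, hC7, hC6, hC5, hD5, hD4] at ih3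
      rw [hT7, hT6, hT5, hB2, hC9, hC8, hC7, hC6, hC5, hD4] at ih2
      rw [hT5, hC6, hC5] at ih1
      linear_combination 204*ih3 - 1190*ih2 + 204*ih1 - ih0

theorem stmt19 (n : ℕ) (hn : 1 ≤ n) : 16 * (T (2*n+1) * B (n-1)) = C (3*n) + C (n+1) := by
  obtain ⟨m, rfl⟩ : ∃ m, n = m + 1 := ⟨n - 1, by omega⟩
  have h := key m
  rw [show 2*(m+1)+1 = 2*m+3 by ring, show m+1-1 = m by omega,
      show 3*(m+1) = 3*m+3 by ring, show m+1+1 = m+2 by ring]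
  exact h
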